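/- arXiv:2307.11210 — 2 statements merged into one kernel-verified Lean document; each statement's English description precedes it below -/
import Mathlib

section
/- Let μ ≥ 2 and let a residual arity a satisfy a ≥ 2μ + 2. Write t = ⌊a/(μ+1)⌋ and r = a - t(μ+1) with 0 ≤ r ≤ μ - 1. Then t ≥ 2, and the coin reserve ρ = 2(a - 2μ + 1) satisfies ρ ≥ 3t - 1. -/
/-- Coin-reserve inequality for the case r ≤ μ - 1. -/
theorem coin_reserve_r_lt_mu (μ a t r : ℤ) (hμ : 2 ≤ μ) (ha : 2 * μ + 2 ≤ a)
    (ht : t = a / (μ + 1)) (hr : r = a - t * (μ + 1)) (hr0 : 0 ≤ r) (hrμ : r ≤ μ - 1) :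
    2 ≤ t ∧ 2 * (a - 2 * μ + 1) ≥ 3 * t - 1 := by
  have hpos : (0:ℤ) < μ + 1 := by linarith
  have ht2 : 2 ≤ t := by
    rw [ht, Int.le_ediv_iff_mul_le hpos]; linarith
  refine ⟨ht2, ?_⟩
  have haeq : a = t * (μ + 1) + r := by linarith
  nlinarith [mul_le_mul_of_nonneg_right ht2 (by linarith : (0:ℤ) ≤ 2*μ - 1)]
end

section
/- Let μ ≥ 2 and consider a tree where every node has between μ and 2μ children, all leaves are at depth L from the root τ, and there are m ≥ 1 marked leaves. The total number of distinct nodes lying on some path from a marked leaf to τ is at most m·(L - ⌈log_{2μ} m⌉) + C·m for some absolute constant C, i.e., O(m·(1 + log_{2μ}(N/m))) where N is the subtree size. -/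
/-!
Level `k` of the footprint consists of the length-`k` prefixes of the marked leaves, so it has at
most `min m ((2μ)^k)` nodes. Below level `⌈log_{2μ} m⌉ - 1` the bounds `(2μ)^k` form a geometric
series whose sum is less than `m`; each of the remaining at most `L - ⌈log_{2μ} m⌉ + 2` levels
contributes at most `m`. Hence one can take `C = 3`.
-/

open Finset

theorem Finset.card_le_pow_of_forall_length_eq {α : Type*} {S : Finset α} {k : ℕ}
    (T : Finset (List α)) (hlen : ∀ l ∈ T, l.length = k) (hmem : ∀ l ∈ T, ∀ a ∈ l, a ∈ S) :
    #T ≤ #S ^ k := by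
  have hinj := card_le_card_of_injOn (s := T)
    (t := Fintype.piFinset fun _ : Fin k => S.map .some) (fun l i => l[(i : ℕ)]?) ?_ ?_
  · simpa using hinj
  · intro l hl
    simp only [mem_coe, Fintype.mem_piFinset, mem_map, Function.Embedding.some_apply]
    intro i
    have hi : (i : ℕ) < l.length := (hlen l hl).symm ▸ i.2
    exact ⟨l[(i : ℕ)], hmem l hl _ (List.getElem_mem hi), (List.getElem?_eq_getElem hi).symm⟩
  · intro l₁ hl₁ l₂ hl₂ heq
    refine List.ext_getElem? fun i => ?_
    by_cases hi : i < k
    · exact congrFun heq ⟨i, hi⟩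
    · rw [List.getElem?_eq_none (by grind), List.getElem?_eq_none (by grind)]

theorem Finset.card_image_take_le_pow {α : Type*} [DecidableEq α] {S : Finset α} {k L : ℕ}
    (hk : k ≤ L) (P : Finset (List α)) (hlen : ∀ p ∈ P, p.length = L)
    (hmem : ∀ p ∈ P, ∀ a ∈ p, a ∈ S) :
    #(P.image (·.take k)) ≤ #S ^ k := by
  refine card_le_pow_of_forall_length_eq _ ?_ ?_ <;> simp only [mem_image, forall_exists_index,
    and_imp, forall_apply_eq_imp_iff₂]
  · exact fun p hp => by rw [List.length_take, hlen p hp, min_eq_left hk]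
  · exact fun p hp a ha => hmem p hp a (List.mem_of_mem_take ha)

theorem Finset.card_biUnion_take_le_sum {α : Type*} [DecidableEq α] (P : Finset (List α)) (L : ℕ) :
    #(P.biUnion fun p => (range (L + 1)).image (p.take ·))
      ≤ ∑ k ∈ range (L + 1), #(P.image (·.take k)) := by
  calc #(P.biUnion fun p => (range (L + 1)).image (p.take ·))
      ≤ #((range (L + 1)).biUnion fun k => P.image (·.take k)) := by
        refine card_le_card fun x hx => ?_
        simp only [mem_biUnion, mem_image] at hx ⊢
        obtain ⟨p, hp, k, hk, rfl⟩ := hx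
        exact ⟨k, hk, p, hp, rfl⟩
    _ ≤ ∑ k ∈ range (L + 1), #(P.image (·.take k)) := card_biUnion_le

theorem Nat.geomSum_range_pred_clog_lt {b m : ℕ} (hb : 2 ≤ b) (hm : 1 ≤ m) :
    ∑ k ∈ range (clog b m - 1), b ^ k < m := by
  obtain rfl | hm := hm.eq_or_lt
  · simp [clog_one_right]
  · exact (geomSum_lt hb fun k hk => mem_range.1 hk).trans (pow_pred_clog_lt_self hb hm)

theorem Nat.sum_range_min_pow_le {b m : ℕ} (hb : 2 ≤ b) (hm : 1 ≤ m) (L : ℕ) :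
    ∑ k ∈ range (L + 1), min m (b ^ k) ≤ m * (L - clog b m) + 3 * m := by
  set s := clog b m - 1
  calc ∑ k ∈ range (L + 1), min m (b ^ k)
      ≤ ∑ k ∈ range (s + (L + 1 - s)), min m (b ^ k) :=
        sum_le_sum_of_subset (range_subset_range.2 (by omega))
    _ = ∑ k ∈ range s, min m (b ^ k) + ∑ k ∈ range (L + 1 - s), min m (b ^ (s + k)) :=
        sum_range_add _ _ _
    _ ≤ ∑ k ∈ range s, b ^ k + ∑ _k ∈ range (L + 1 - s), m := by
        gcongr <;> simp
    _ ≤ m + (L - clog b m + 2) * m := by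
        rw [sum_const, card_range, smul_eq_mul]
        gcongr
        · exact (geomSum_range_pred_clog_lt hb hm).le
        · omega
    _ = m * (L - clog b m) + 3 * m := by ring

/-- Nodes are positions below `τ`, i.e. lists of child indices; the nodes on the path from a
marked leaf `p` to `τ` are the prefixes of `p`. -/
theorem insertion_footprint :
    ∃ C : ℕ, ∀ (μ L m : ℕ) (P : Finset (List ℕ)),
      2 ≤ μ → 1 ≤ m → P.card = m →
      (∀ p ∈ P, p.length = L) →
      (∀ p ∈ P, ∀ i ∈ p, i < 2 * μ) →
      (P.biUnion fun p => (Finset.range (L + 1)).image fun k => p.take k).card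
        ≤ m * (L - Nat.clog (2 * μ) m) + C * m := by
  refine ⟨3, fun μ L m P hμ hm hcard hlen hval => ?_⟩
  have hlevel : ∀ k ∈ range (L + 1), #(P.image (·.take k)) ≤ min m ((2 * μ) ^ k) := fun k hk =>
    le_min (hcard ▸ card_image_le) <| by
      simpa using card_image_take_le_pow (S := range (2 * μ)) (Nat.lt_succ_iff.1 (mem_range.1 hk))
        P hlen fun p hp i hi => mem_range.2 (hval p hp i hi)
  calc #(P.biUnion fun p => (range (L + 1)).image (p.take ·))
      ≤ ∑ k ∈ range (L + 1), #(P.image (·.take k)) := card_biUnion_take_le_sum P L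
    _ ≤ ∑ k ∈ range (L + 1), min m ((2 * μ) ^ k) := sum_le_sum hlevel
    _ ≤ m * (L - Nat.clog (2 * μ) m) + 3 * m := Nat.sum_range_min_pow_le (by omega) hm L
end
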